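/- F is strictly increasing on (0, ∞), satisfies 0 < F(x) < 1/e for all x > 0, and F(x) tends to 1/e as x → ∞; consequently F maps (0, ∞) bijectively onto (0, 1/e). -/

import Mathlib

/-!
With `g v = φ (1 / v + v / 2)` positive and integrable on `(0, ∞)`, `F` is a strictly increasing
continuous primitive of `g` tending to `∫₀^∞ g`, so everything reduces to `∫₀^∞ g = 1 / e`.
Since `(1 / v + v / 2)² = (v / 2 - 1 / v)² + 2`, the substitution `x = v / 2 - 1 / v`, a bijection
`(0, ∞) → ℝ` with `dx = (1 / 2 + 1 / v²) dv`, gives `∫₀^∞ (1 / 2 + 1 / v²) g = e⁻¹ ∫ φ = 1 / e`.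
Finally `g` is invariant under `v ↦ 2 / v`, which turns `∫₀^∞ g / 2` into `∫₀^∞ g / v²`;
hence `∫₀^∞ g = ∫₀^∞ (1 / 2 + 1 / v²) g`.
-/

open Real Set Filter

/-- Standard normal density. -/
noncomputable def stdNormalPDF (x : ℝ) : ℝ :=
  Real.exp (-x ^ 2 / 2) / Real.sqrt (2 * Real.pi)

/-- `F x = ∫_0^x φ(1/v + v/2) dv`. -/
noncomputable def F (x : ℝ) : ℝ :=
  ∫ v in (0 : ℝ)..x, stdNormalPDF (1 / v + v / 2)

open MeasureTheory

section Primitive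

variable {g : ℝ → ℝ}

lemma intervalIntegrable_of_integrableOn_Ioi (hint : IntegrableOn g (Ioi 0)) {x y : ℝ}
    (hx : 0 ≤ x) (hy : 0 ≤ y) : IntervalIntegrable g volume x y := by
  rw [intervalIntegrable_iff]
  refine hint.mono_set fun v hv => ?_
  rw [uIoc, mem_Ioc] at hv
  exact lt_of_le_of_lt (le_min hx hy) hv.1

lemma strictMonoOn_primitive_of_pos (hpos : ∀ v, 0 < v → 0 < g v)
    (hint : IntegrableOn g (Ioi 0)) :
    StrictMonoOn (fun x => ∫ v in 0..x, g v) (Ici 0) := by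
  intro x (hx : 0 ≤ x) y (hy : 0 ≤ y) hxy
  have hxy_pos : 0 < ∫ v in x..y, g v :=
    intervalIntegral.intervalIntegral_pos_of_pos_on
      (intervalIntegrable_of_integrableOn_Ioi hint hx hy)
      (fun v hv => hpos v (hx.trans_lt hv.1)) hxy
  show ∫ v in 0..x, g v < ∫ v in 0..y, g v
  rw [← intervalIntegral.integral_add_adjacent_intervals
    (intervalIntegrable_of_integrableOn_Ioi hint le_rfl hx)
    (intervalIntegrable_of_integrableOn_Ioi hint hx hy)]
  linarith

lemma primitive_mem_Ioo_of_pos (hpos : ∀ v, 0 < v → 0 < g v)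
    (hint : IntegrableOn g (Ioi 0)) {x : ℝ} (hx : 0 < x) :
    ∫ v in 0..x, g v ∈ Ioo 0 (∫ v in Ioi 0, g v) := by
  have hmono := strictMonoOn_primitive_of_pos hpos hint
  have hx1 : (0 : ℝ) ≤ x + 1 := by linarith
  have hle : ∫ v in 0..x + 1, g v ≤ ∫ v in Ioi 0, g v :=
    ge_of_tendsto (intervalIntegral_tendsto_integral_Ioi 0 hint tendsto_id) <|
      (eventually_ge_atTop (x + 1)).mono fun t ht => hmono.monotoneOn hx1 (hx1.trans ht) ht
  refine ⟨?_, (hmono hx.le hx1 (lt_add_one x)).trans_le hle⟩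
  simpa using hmono self_mem_Ici hx.le hx

lemma bijOn_primitive_Ioi_Ioo (hpos : ∀ v, 0 < v → 0 < g v)
    (hint : IntegrableOn g (Ioi 0)) :
    BijOn (fun x => ∫ v in 0..x, g v) (Ioi 0) (Ioo 0 (∫ v in Ioi 0, g v)) := by
  refine ⟨fun x hx => primitive_mem_Ioo_of_pos hpos hint hx,
    ((strictMonoOn_primitive_of_pos hpos hint).mono Ioi_subset_Ici_self).injOn, ?_⟩
  rintro y ⟨hy0, hyL⟩
  obtain ⟨b, hyb, hb⟩ := ((intervalIntegral_tendsto_integral_Ioi 0 hint tendsto_id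
    |>.eventually (eventually_gt_nhds hyL)).and (eventually_ge_atTop 0)).exists
  have hcont : ContinuousOn (fun x => ∫ v in 0..x, g v) (Icc 0 b) := by
    simpa [uIcc_of_le hb] using intervalIntegral.continuousOn_primitive_interval'
      (intervalIntegrable_of_integrableOn_Ioi hint le_rfl hb) left_mem_uIcc
  obtain ⟨x, hx, hxy⟩ := intermediate_value_Ioc hb hcont (by simpa using ⟨hy0, hyb.le⟩)
  exact ⟨x, hx.1, hxy⟩

end Primitive

section ChangeOfVariables

variable {E : Type*} [NormedAddCommGroup E] [NormedSpace ℝ E]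

lemma hasDerivAt_half_sub_inv {v : ℝ} (hv : v ≠ 0) :
    HasDerivAt (fun v : ℝ => v / 2 - 1 / v) (1 / 2 + 1 / v ^ 2) v := by
  simpa [one_div, sub_neg_eq_add] using
    ((hasDerivAt_id v).div_const 2).fun_sub (hasDerivAt_inv hv)

lemma strictMonoOn_half_sub_inv : StrictMonoOn (fun v : ℝ => v / 2 - 1 / v) (Ioi 0) := by
  intro a (ha : 0 < a) b _ hab
  have : 1 / b < 1 / a := one_div_lt_one_div_of_lt ha hab
  dsimp only
  linarith

lemma image_half_sub_inv_Ioi : (fun v : ℝ => v / 2 - 1 / v) '' Ioi 0 = univ := by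
  refine eq_univ_of_forall fun y => ?_
  -- the positive root of `v ^ 2 - 2 y v - 2 = 0`
  have hs : √(y ^ 2 + 2) ^ 2 = y ^ 2 + 2 := sq_sqrt (by positivity)
  have hy : |y| < √(y ^ 2 + 2) := by
    rw [← sqrt_sq_eq_abs]
    exact sqrt_lt_sqrt (sq_nonneg y) (by linarith)
  have hv : 0 < y + √(y ^ 2 + 2) := by linarith [neg_abs_le y]
  refine ⟨y + √(y ^ 2 + 2), hv, ?_⟩
  field_simp
  nlinarith

lemma integral_Ioi_half_sub_inv_smul (f : ℝ → E) :
    ∫ v in Ioi 0, (1 / 2 + 1 / v ^ 2) • f (v / 2 - 1 / v) = ∫ x, f x := by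
  conv_rhs => rw [← setIntegral_univ, ← image_half_sub_inv_Ioi,
    integral_image_eq_integral_abs_deriv_smul measurableSet_Ioi
      (fun v hv => (hasDerivAt_half_sub_inv (ne_of_gt hv)).hasDerivWithinAt)
      strictMonoOn_half_sub_inv.injOn]
  refine setIntegral_congr_fun measurableSet_Ioi fun v (hv : 0 < v) => ?_
  rw [abs_of_pos (by positivity)]

lemma integrableOn_Ioi_half_sub_inv_smul_iff {f : ℝ → E} :
    IntegrableOn (fun v => (1 / 2 + 1 / v ^ 2) • f (v / 2 - 1 / v)) (Ioi 0) ↔ Integrable f := by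
  rw [← integrableOn_univ, ← image_half_sub_inv_Ioi,
    integrableOn_image_iff_integrableOn_abs_deriv_smul measurableSet_Ioi
      (fun v hv => (hasDerivAt_half_sub_inv (ne_of_gt hv)).hasDerivWithinAt)
      strictMonoOn_half_sub_inv.injOn]
  refine integrableOn_congr_fun (fun v (hv : 0 < v) => ?_) measurableSet_Ioi
  rw [abs_of_pos (by positivity)]

lemma integral_Ioi_div_sq_smul_comp_div {c : ℝ} (hc : 0 < c) (f : ℝ → E) :
    ∫ v in Ioi 0, (c / v ^ 2) • f (c / v) = ∫ v in Ioi 0, f v := by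
  have himage : (fun v : ℝ => c / v) '' Ioi 0 = Ioi 0 := by
    refine Subset.antisymm (image_subset_iff.2 fun v (hv : 0 < v) => div_pos hc hv)
      fun v (hv : 0 < v) => ⟨c / v, div_pos hc hv, div_div_cancel₀ hc.ne'⟩
  have hderiv : ∀ v ∈ Ioi (0 : ℝ),
      HasDerivWithinAt (fun v : ℝ => c / v) (-(c / v ^ 2)) (Ioi 0) v := fun v hv => by
    simpa [div_eq_mul_inv] using ((hasDerivAt_inv (ne_of_gt hv)).const_mul c).hasDerivWithinAt
  have hinj : InjOn (fun v : ℝ => c / v) (Ioi 0) := fun a _ b _ hab =>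
    inv_injective (mul_left_cancel₀ hc.ne' hab)
  conv_rhs => rw [← himage, integral_image_eq_integral_abs_deriv_smul measurableSet_Ioi hderiv hinj]
  refine setIntegral_congr_fun measurableSet_Ioi fun v (hv : 0 < v) => ?_
  rw [abs_neg, abs_of_pos (by positivity)]

end ChangeOfVariables

section Gaussian

open ProbabilityTheory

lemma stdNormalPDF_eq_gaussianPDFReal : stdNormalPDF = gaussianPDFReal 0 1 := by
  ext x
  simp [stdNormalPDF, gaussianPDFReal, div_eq_inv_mul]

lemma stdNormalPDF_pos (x : ℝ) : 0 < stdNormalPDF x := by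
  rw [stdNormalPDF_eq_gaussianPDFReal]
  exact gaussianPDFReal_pos 0 1 x one_ne_zero

lemma measurable_stdNormalPDF : Measurable stdNormalPDF := by
  rw [stdNormalPDF_eq_gaussianPDFReal]
  exact measurable_gaussianPDFReal 0 1

lemma integral_stdNormalPDF : ∫ x, stdNormalPDF x = 1 := by
  rw [stdNormalPDF_eq_gaussianPDFReal]
  exact integral_gaussianPDFReal_eq_one 0 one_ne_zero

lemma integrable_stdNormalPDF : Integrable stdNormalPDF := by
  rw [stdNormalPDF_eq_gaussianPDFReal]
  exact integrable_gaussianPDFReal 0 1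

end Gaussian

lemma stdNormalPDF_inv_add_half_comp_two_div (v : ℝ) :
    stdNormalPDF (1 / (2 / v) + 2 / v / 2) = stdNormalPDF (1 / v + v / 2) := by
  rw [one_div_div, div_div, mul_comm, ← div_div, div_self two_ne_zero, add_comm]

lemma stdNormalPDF_inv_add_half {v : ℝ} (hv : v ≠ 0) :
    stdNormalPDF (1 / v + v / 2) = (exp 1)⁻¹ * stdNormalPDF (v / 2 - 1 / v) := by
  simp only [stdNormalPDF, mul_div_assoc', ← exp_neg, ← exp_add]
  congr 2
  field_simp
  ring

lemma eqOn_weighted_stdNormalPDF_inv_add_half :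
    EqOn (fun v => (1 / 2 + 1 / v ^ 2) * stdNormalPDF (1 / v + v / 2))
      (fun v => (exp 1)⁻¹ * ((1 / 2 + 1 / v ^ 2) • stdNormalPDF (v / 2 - 1 / v))) (Ioi 0) :=
  fun v (hv : 0 < v) => by
    simp only [smul_eq_mul, stdNormalPDF_inv_add_half hv.ne']
    ring

lemma integrableOn_weighted_stdNormalPDF_inv_add_half :
    IntegrableOn (fun v => (1 / 2 + 1 / v ^ 2) * stdNormalPDF (1 / v + v / 2)) (Ioi 0) :=
  IntegrableOn.congr_fun
    ((integrableOn_Ioi_half_sub_inv_smul_iff.2 integrable_stdNormalPDF).const_mul _)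
    eqOn_weighted_stdNormalPDF_inv_add_half.symm measurableSet_Ioi

lemma integral_weighted_stdNormalPDF_inv_add_half :
    ∫ v in Ioi 0, (1 / 2 + 1 / v ^ 2) * stdNormalPDF (1 / v + v / 2) = 1 / exp 1 := by
  rw [setIntegral_congr_fun measurableSet_Ioi eqOn_weighted_stdNormalPDF_inv_add_half,
    integral_const_mul, integral_Ioi_half_sub_inv_smul, integral_stdNormalPDF, one_div, mul_one]

lemma integrableOn_stdNormalPDF_inv_add_half :
    IntegrableOn (fun v => stdNormalPDF (1 / v + v / 2)) (Ioi 0) := by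
  refine (integrableOn_weighted_stdNormalPDF_inv_add_half.const_mul 2).mono'
    (measurable_stdNormalPDF.comp (by fun_prop)).aestronglyMeasurable
    ((ae_restrict_iff' measurableSet_Ioi).2 (ae_of_all _ fun v (hv : 0 < v) => ?_))
  have hφ := stdNormalPDF_pos (1 / v + v / 2)
  have hweight : 1 ≤ 2 * (1 / 2 + 1 / v ^ 2) := by
    have : 0 ≤ 1 / v ^ 2 := by positivity
    linarith
  rw [Real.norm_of_nonneg hφ.le, ← mul_assoc]
  exact le_mul_of_one_le_left hφ.le hweight

lemma integral_stdNormalPDF_inv_add_half :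
    ∫ v in Ioi 0, stdNormalPDF (1 / v + v / 2) = 1 / exp 1 := by
  have hint := integrableOn_stdNormalPDF_inv_add_half
  have hsym : ∫ v in Ioi 0, (1 / 2) * stdNormalPDF (1 / v + v / 2)
      = ∫ v in Ioi 0, (1 / v ^ 2) * stdNormalPDF (1 / v + v / 2) := by
    rw [← integral_Ioi_div_sq_smul_comp_div two_pos]
    refine setIntegral_congr_fun measurableSet_Ioi fun v (hv : 0 < v) => ?_
    simp only [smul_eq_mul, stdNormalPDF_inv_add_half_comp_two_div]
    field_simp
  have hint_inv_sq : IntegrableOn (fun v => (1 / v ^ 2) * stdNormalPDF (1 / v + v / 2)) (Ioi 0) :=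
    IntegrableOn.congr_fun
      (integrableOn_weighted_stdNormalPDF_inv_add_half.sub (hint.const_mul (1 / 2)))
      (fun v _ => by simp only [Pi.sub_apply]; ring) measurableSet_Ioi
  calc ∫ v in Ioi 0, stdNormalPDF (1 / v + v / 2)
      = (∫ v in Ioi 0, (1 / 2) * stdNormalPDF (1 / v + v / 2))
        + ∫ v in Ioi 0, (1 / 2) * stdNormalPDF (1 / v + v / 2) := by
        simp only [integral_const_mul]; ring
    _ = (∫ v in Ioi 0, (1 / 2) * stdNormalPDF (1 / v + v / 2))
        + ∫ v in Ioi 0, (1 / v ^ 2) * stdNormalPDF (1 / v + v / 2) := by rw [hsym]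
    _ = ∫ v in Ioi 0, (1 / 2 + 1 / v ^ 2) * stdNormalPDF (1 / v + v / 2) := by
        rw [← integral_add (hint.const_mul _) hint_inv_sq]
        simp only [add_mul]
    _ = 1 / exp 1 := integral_weighted_stdNormalPDF_inv_add_half

/-- `F` is strictly increasing, takes values in `(0, 1/e)`, tends to `1/e` at
infinity, and maps `(0, ∞)` bijectively onto `(0, 1/e)`. -/
theorem F_props :
    StrictMonoOn F (Set.Ioi 0) ∧
    (∀ x : ℝ, 0 < x → 0 < F x ∧ F x < 1 / Real.exp 1) ∧
    Filter.Tendsto F Filter.atTop (nhds (1 / Real.exp 1)) ∧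
    Set.BijOn F (Set.Ioi 0) (Set.Ioo 0 (1 / Real.exp 1)) := by
  have hpos : ∀ v, 0 < v → 0 < stdNormalPDF (1 / v + v / 2) := fun v _ => stdNormalPDF_pos _
  have hint := integrableOn_stdNormalPDF_inv_add_half
  have hF : F = fun x => ∫ v in 0..x, stdNormalPDF (1 / v + v / 2) := rfl
  rw [hF, ← integral_stdNormalPDF_inv_add_half]
  exact ⟨(strictMonoOn_primitive_of_pos hpos hint).mono Ioi_subset_Ici_self,
    fun x hx => primitive_mem_Ioo_of_pos hpos hint hx,
    intervalIntegral_tendsto_integral_Ioi 0 hint tendsto_id,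
    bijOn_primitive_Ioi_Ioo hpos hint⟩
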